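/- Let f : G → H be a semi-planar function between finite abelian groups of the same even order k. Then in the incidence structure S(G,H;f): any two distinct points are incident with either 0 or exactly 2 common lines; any two distinct lines are incident with either 0 or exactly 2 common points; every point is incident with exactly k lines; and every line is incident with exactly k points. -/

import Mathlib

/-- A function `f : G → H` is *semi-planar* if for every nonzero `a : G` and every
`y : H`, the equation `f (x + a) - f x = y` has either 0 or exactly 2 solutions. -/
def IsSemiPlanar {G H : Type*} [AddGroup G] [AddGroup H] (f : G → H) : Prop :=
  ∀ a : G, a ≠ 0 → ∀ y : H,
    Nat.card {x : G // f (x + a) - f x = y} = 0 ∨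
    Nat.card {x : G // f (x + a) - f x = y} = 2

/-- The point `p = (x, y)` is incident with the line `l = L(a, b)` iff `y = f (x - a) + b`. -/
def Incid {G H : Type*} [Sub G] [Add H] (f : G → H) (p l : G × H) : Prop :=
  p.2 = f (p.1 - l.1) + l.2

/-- The adjacency relation of the incidence graph of `S(G,H;f)`: points on the left,
lines on the right, a point adjacent to a line iff incident. -/
def IncAdj {G H : Type*} [Sub G] [Add H] (f : G → H) :
    (G × H) ⊕ (G × H) → (G × H) ⊕ (G × H) → Prop
  | Sum.inl p, Sum.inr l => Incid f p l
  | Sum.inr l, Sum.inl p => Incid f p l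
  | _, _ => False

/-- The incidence graph of `S(G,H;f)`. -/
def incGraph {G H : Type*} [Sub G] [Add H] (f : G → H) :
    SimpleGraph ((G × H) ⊕ (G × H)) where
  Adj := IncAdj f
  symm := by
    refine ⟨fun v w h => ?_⟩
    cases v <;> cases w <;> exact h
  loopless := by
    refine ⟨fun v h => ?_⟩
    cases v <;> exact h

/-- The line `L(a,b)` belongs to the substructure `S₁`, i.e. lies in the same
connected component of the incidence graph as the line `L(0,0)`. -/
def InS1 {G H : Type*} [SubtractionMonoid G] [SubNegMonoid H] (f : G → H) (l : G × H) : Prop :=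
  (incGraph f).Reachable (Sum.inr l) (Sum.inr ((0 : G), (0 : H)))

/-! Parametrising the lines `L(a, b)` through a point `(x, y)` by `u = x - a`, and the points on a
line likewise, identifies both with `G`. In these coordinates a second point (resp. line) is
incident iff `f (u + d₁) - f u = d₂`, where `(d₁, d₂) ≠ 0` is the difference of the two points
(resp. lines). For `d₁ ≠ 0` semi-planarity gives 0 or 2 solutions; for `d₁ = 0` there are none. -/

section Incidence

variable {G H : Type*} [AddCommGroup G] [AddCommGroup H] (f : G → H)

theorem incid_iff_sub_eq (p l : G × H) : Incid f p l ↔ l.2 = p.2 - f (p.1 - l.1) := by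
  rw [Incid, eq_sub_iff_add_eq, add_comm, eq_comm]

def linesThroughEquiv (q : G × H) : G ≃ {l : G × H // Incid f q l} where
  toFun u := ⟨(q.1 - u, q.2 - f u), by rw [incid_iff_sub_eq, sub_sub_cancel]⟩
  invFun l := q.1 - l.1.1
  left_inv u := sub_sub_cancel q.1 u
  right_inv := by
    rintro ⟨l, hl⟩
    rw [incid_iff_sub_eq] at hl
    ext <;> simp [hl]

def pointsOnEquiv (m : G × H) : G ≃ {p : G × H // Incid f p m} where
  toFun u := ⟨(u + m.1, f u + m.2), by simp [Incid]⟩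
  invFun p := p.1.1 - m.1
  left_inv u := add_sub_cancel_right u m.1
  right_inv := by
    rintro ⟨p, hp⟩
    ext
    · exact sub_add_cancel p.1 m.1
    · exact hp.symm

theorem incid_linesThroughEquiv_iff (p q : G × H) (u : G) :
    Incid f p (linesThroughEquiv f q u) ↔ f (u + (p - q).1) - f u = (p - q).2 := by
  change p.2 = f (p.1 - (q.1 - u)) + (q.2 - f u) ↔ f (u + (p.1 - q.1)) - f u = p.2 - q.2
  rw [show p.1 - (q.1 - u) = u + (p.1 - q.1) by abel]
  grind

theorem incid_pointsOnEquiv_iff (l m : G × H) (u : G) :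
    Incid f (pointsOnEquiv f m u) l ↔ f (u + (m - l).1) - f u = (m - l).2 := by
  change f u + m.2 = f (u + m.1 - l.1) + l.2 ↔ f (u + (m.1 - l.1)) - f u = m.2 - l.2
  rw [add_sub_assoc]
  grind

theorem card_commonLines (p q : G × H) :
    Nat.card {l : G × H // Incid f p l ∧ Incid f q l} =
      Nat.card {u : G // f (u + (p - q).1) - f u = (p - q).2} :=
  Nat.card_congr <| (Equiv.subtypeEquivRight fun _ => and_comm).trans <|
    (Equiv.subtypeSubtypeEquivSubtypeInter _ _).symm.trans <|
      (Equiv.subtypeEquiv (linesThroughEquiv f q) fun u => (incid_linesThroughEquiv_iff f p q u).symm).symm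

theorem card_commonPoints (l m : G × H) :
    Nat.card {p : G × H // Incid f p l ∧ Incid f p m} =
      Nat.card {u : G // f (u + (m - l).1) - f u = (m - l).2} :=
  Nat.card_congr <| (Equiv.subtypeEquivRight fun _ => and_comm).trans <|
    (Equiv.subtypeSubtypeEquivSubtypeInter _ _).symm.trans <|
      (Equiv.subtypeEquiv (pointsOnEquiv f m) fun u => (incid_pointsOnEquiv_iff f l m u).symm).symm

end Incidence

theorem IsSemiPlanar.card_sub_eq_zero_or_two {G H : Type*} [AddGroup G] [AddGroup H]
    {f : G → H} (hf : IsSemiPlanar f) (d : G × H) (hd : d ≠ 0) :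
    Nat.card {x : G // f (x + d.1) - f x = d.2} = 0 ∨
      Nat.card {x : G // f (x + d.1) - f x = d.2} = 2 := by
  by_cases hd₁ : d.1 = 0
  · have hd₂ : d.2 ≠ 0 := fun hd₂ => hd (Prod.ext hd₁ hd₂)
    left
    simp [hd₁, hd₂.symm]
  · exact hf d.1 hd₁ d.2

theorem sbp_properties_general {G H : Type*} [AddCommGroup G] [AddCommGroup H]
    [Fintype G]
    (f : G → H) (hf : IsSemiPlanar f) :
    (∀ p q : G × H, p ≠ q →
      Nat.card {l : G × H // Incid f p l ∧ Incid f q l} = 0 ∨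
      Nat.card {l : G × H // Incid f p l ∧ Incid f q l} = 2) ∧
    (∀ l m : G × H, l ≠ m →
      Nat.card {p : G × H // Incid f p l ∧ Incid f p m} = 0 ∨
      Nat.card {p : G × H // Incid f p l ∧ Incid f p m} = 2) ∧
    (∀ p : G × H, Nat.card {l : G × H // Incid f p l} = Fintype.card G) ∧
    (∀ l : G × H, Nat.card {p : G × H // Incid f p l} = Fintype.card G) := by
  refine ⟨fun p q hpq => ?_, fun l m hlm => ?_, fun p => ?_, fun l => ?_⟩
  · rw [card_commonLines]
    exact hf.card_sub_eq_zero_or_two (p - q) (sub_ne_zero.2 hpq)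
  · rw [card_commonPoints]
    exact hf.card_sub_eq_zero_or_two (m - l) (sub_ne_zero.2 hlm.symm)
  · rw [← Nat.card_congr (linesThroughEquiv f p), Nat.card_eq_fintype_card]
  · rw [← Nat.card_congr (pointsOnEquiv f l), Nat.card_eq_fintype_card]

/-- In `S(G,H;f)` for a semi-planar `f` between finite abelian groups of the same even
order `k`: two distinct points lie on 0 or exactly 2 common lines, two distinct lines
meet in 0 or exactly 2 common points, every point lies on exactly `k` lines, and every
line contains exactly `k` points. -/
theorem sbp_properties {G H : Type*} [AddCommGroup G] [AddCommGroup H]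
    [Fintype G] [Fintype H]
    (hcard : Fintype.card G = Fintype.card H) (heven : Even (Fintype.card G))
    (f : G → H) (hf : IsSemiPlanar f) :
    (∀ p q : G × H, p ≠ q →
      Nat.card {l : G × H // Incid f p l ∧ Incid f q l} = 0 ∨
      Nat.card {l : G × H // Incid f p l ∧ Incid f q l} = 2) ∧
    (∀ l m : G × H, l ≠ m →
      Nat.card {p : G × H // Incid f p l ∧ Incid f p m} = 0 ∨
      Nat.card {p : G × H // Incid f p l ∧ Incid f p m} = 2) ∧
    (∀ p : G × H, Nat.card {l : G × H // Incid f p l} = Fintype.card G) ∧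
    (∀ l : G × H, Nat.card {p : G × H // Incid f p l} = Fintype.card G) :=
  sbp_properties_general f hf
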